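/- arXiv:1512.04046 — 2 statements merged into one kernel-verified Lean document; each statement's English description precedes it below -/
import Mathlib

section
/- Let (R, ∇R, ∇²R) be an algebraic two-jet on V. Then ∇*∇R(x₁,x₂,x₃,x₄) = (1/4)·Young(2,2)[(z₁,z₂,z₃,z₄) ↦ ∇²_{z₁,z₃}ric(z₂,z₄)](x₁,x₂,x₃,x₄) − (1/2)·R*R(x₁,x₂,x₃,x₄) for all x₁,x₂,x₃,x₄ ∈ V. In particular, if ∇²ric = 0, then ∇*∇R = −(1/2)·R*R. -/
open scoped RealInnerProductSpace

namespace CurvJet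

variable {V : Type*} [NormedAddCommGroup V] [InnerProductSpace ℝ V] {n : ℕ}

/-- Quadrilinear forms on `V`, the ambient space of algebraic curvature tensors. -/
abbrev Curv (V : Type*) [NormedAddCommGroup V] [InnerProductSpace ℝ V] : Type _ :=
  V →ₗ[ℝ] V →ₗ[ℝ] V →ₗ[ℝ] V →ₗ[ℝ] ℝ

/-- The underlying 4-argument function of a quadrilinear form. -/
def toFun4 (R : Curv V) : V → V → V → V → ℝ := fun z₁ z₂ z₃ z₄ => R z₁ z₂ z₃ z₄

/-- `R` is an algebraic curvature tensor: antisymmetry in the first pair, pair symmetry,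
and the first Bianchi identity. -/
def IsCurv (R : Curv V) : Prop :=
  (∀ x y z w, R x y z w = - R y x z w) ∧
  (∀ x y z w, R x y z w = R z w x y) ∧
  (∀ x y z w, R x y z w + R y z x w + R z x y w = 0)

/-- The Ricci tensor `ric_R(x,y) = -∑ᵢ R(x,eᵢ,y,eᵢ)`. -/
noncomputable def ric (e : OrthonormalBasis (Fin n) ℝ V) (R : Curv V) (x y : V) : ℝ :=
  - ∑ i, R x (e i) y (e i)

/-- The curvature endomorphism `R_{x,y}`, characterized by `⟪R_{x,y}z, w⟫ = R(x,y,z,w)`. -/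
noncomputable def curvEnd (e : OrthonormalBasis (Fin n) ℝ V) (R : Curv V) (x y z : V) : V :=
  ∑ i, R x y z (e i) • e i

/-- Action of an endomorphism `B` on a covariant 4-tensor by algebraic derivation. -/
def act4 (B : V → V) (A : V → V → V → V → ℝ) (x₁ x₂ x₃ x₄ : V) : ℝ :=
  -(A (B x₁) x₂ x₃ x₄ + A x₁ (B x₂) x₃ x₄ + A x₁ x₂ (B x₃) x₄ + A x₁ x₂ x₃ (B x₄))

/-- Action of an endomorphism `B` on a covariant 2-tensor by algebraic derivation. -/
def act2 (B : V → V) (A : V → V → ℝ) (x y : V) : ℝ :=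
  -(A (B x) y + A x (B y))

/-- `R*A` for a covariant 4-tensor `A`. -/
noncomputable def star4 (e : OrthonormalBasis (Fin n) ℝ V) (R : Curv V)
    (A : V → V → V → V → ℝ) (x₁ x₂ x₃ x₄ : V) : ℝ :=
  -((∑ j, act4 (curvEnd e R x₁ (e j)) A (e j) x₂ x₃ x₄)
    + (∑ j, act4 (curvEnd e R x₂ (e j)) A x₁ (e j) x₃ x₄)
    + (∑ j, act4 (curvEnd e R x₃ (e j)) A x₁ x₂ (e j) x₄)
    + (∑ j, act4 (curvEnd e R x₄ (e j)) A x₁ x₂ x₃ (e j)))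

/-- `R*A` for a covariant 2-tensor `A`. -/
noncomputable def star2 (e : OrthonormalBasis (Fin n) ℝ V) (R : Curv V)
    (A : V → V → ℝ) (x y : V) : ℝ :=
  -((∑ j, act2 (curvEnd e R x (e j)) A (e j) y)
    + (∑ j, act2 (curvEnd e R y (e j)) A x (e j)))

/-- The algebraic curvature tensor `R*R`. -/
noncomputable def RstarR (e : OrthonormalBasis (Fin n) ℝ V) (R : Curv V) :
    V → V → V → V → ℝ :=
  star4 e R (toFun4 R)

/-- Row symmetrization of the Young tableau with rows `{1,3}`, `{2,4}` on a 4-tensor. -/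
def rowSym22 (T : V → V → V → V → ℝ) (x₁ x₂ x₃ x₄ : V) : ℝ :=
  T x₁ x₂ x₃ x₄ + T x₃ x₂ x₁ x₄ + T x₁ x₄ x₃ x₂ + T x₃ x₄ x₁ x₂

/-- The Young symmetrizer of the tableau with rows `{1,3}`, `{2,4}` and columns
`{1,2}`, `{3,4}`, acting on 4-tensors. -/
def young22 (T : V → V → V → V → ℝ) (x₁ x₂ x₃ x₄ : V) : ℝ :=
  rowSym22 T x₁ x₂ x₃ x₄ - rowSym22 T x₂ x₁ x₃ x₄
    - rowSym22 T x₁ x₂ x₄ x₃ + rowSym22 T x₂ x₁ x₄ x₃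

/-- Row symmetrization of the Young tableau with rows `{1,3,5,6}`, `{2,4}` on a 6-tensor. -/
noncomputable def rowSym42 (T : V → V → V → V → V → V → ℝ) (x₁ x₂ x₃ x₄ x₅ x₆ : V) : ℝ :=
  ∑ σ : Equiv.Perm (Fin 4),
    (T (![x₁, x₃, x₅, x₆] (σ 0)) x₂ (![x₁, x₃, x₅, x₆] (σ 1)) x₄
        (![x₁, x₃, x₅, x₆] (σ 2)) (![x₁, x₃, x₅, x₆] (σ 3))
     + T (![x₁, x₃, x₅, x₆] (σ 0)) x₄ (![x₁, x₃, x₅, x₆] (σ 1)) x₂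
        (![x₁, x₃, x₅, x₆] (σ 2)) (![x₁, x₃, x₅, x₆] (σ 3)))

/-- The Young symmetrizer of the tableau on six slots with rows `{1,3,5,6}`, `{2,4}` and
columns `{1,2}`, `{3,4}`. -/
noncomputable def young42 (T : V → V → V → V → V → V → ℝ) (x₁ x₂ x₃ x₄ x₅ x₆ : V) : ℝ :=
  rowSym42 T x₁ x₂ x₃ x₄ x₅ x₆ - rowSym42 T x₂ x₁ x₃ x₄ x₅ x₆
    - rowSym42 T x₁ x₂ x₄ x₃ x₅ x₆ + rowSym42 T x₂ x₁ x₄ x₃ x₅ x₆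

/-- Row symmetrization of the Young tableau with rows `{1,3,5}`, `{2,4}` on a 5-tensor
(the fifth function argument is the slot lying in the first row). -/
noncomputable def rowSym5 (T : V → V → V → V → V → ℝ) (z₁ z₂ z₃ z₄ z₅ : V) : ℝ :=
  ∑ σ : Equiv.Perm (Fin 3),
    (T (![z₁, z₃, z₅] (σ 0)) z₂ (![z₁, z₃, z₅] (σ 1)) z₄ (![z₁, z₃, z₅] (σ 2))
     + T (![z₁, z₃, z₅] (σ 0)) z₄ (![z₁, z₃, z₅] (σ 1)) z₂ (![z₁, z₃, z₅] (σ 2)))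

/-- The Young symmetrizer of the tableau on five slots with rows `{1,3,5}`, `{2,4}` and
columns `{1,2}`, `{3,4}` (the fifth function argument is the slot in the first row). -/
noncomputable def young5 (T : V → V → V → V → V → ℝ) (z₁ z₂ z₃ z₄ z₅ : V) : ℝ :=
  rowSym5 T z₁ z₂ z₃ z₄ z₅ - rowSym5 T z₂ z₁ z₃ z₄ z₅
    - rowSym5 T z₁ z₂ z₄ z₃ z₅ + rowSym5 T z₂ z₁ z₄ z₃ z₅

/-- First-order jet conditions: each `∇ₓR` is a curvature tensor and the second Bianchi
identity holds. -/
def IsJet1 (D1 : V →ₗ[ℝ] Curv V) : Prop :=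
  (∀ x, IsCurv (D1 x)) ∧
  (∀ x y z u v, D1 x y z u v + D1 y z x u v + D1 z x y u v = 0)

/-- Second-order jet conditions: each `∇²_{x,y}R` is a curvature tensor, the second Bianchi
identity holds, and the Ricci identity `∇²_{x,y}R − ∇²_{y,x}R = R_{x,y}·R` holds. -/
def IsJet2 (e : OrthonormalBasis (Fin n) ℝ V) (R : Curv V)
    (D2 : V →ₗ[ℝ] V →ₗ[ℝ] Curv V) : Prop :=
  (∀ x y, IsCurv (D2 x y)) ∧
  (∀ x y z w u v, D2 x y z w u v + D2 x z w y u v + D2 x w y z u v = 0) ∧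
  (∀ x y z₁ z₂ z₃ z₄, D2 x y z₁ z₂ z₃ z₄ - D2 y x z₁ z₂ z₃ z₄ =
    act4 (curvEnd e R x y) (toFun4 R) z₁ z₂ z₃ z₄)

/-- Algebraic two-jet `(R, ∇R, ∇²R)`. -/
def IsTwoJet (e : OrthonormalBasis (Fin n) ℝ V) (R : Curv V)
    (D1 : V →ₗ[ℝ] Curv V) (D2 : V →ₗ[ℝ] V →ₗ[ℝ] Curv V) : Prop :=
  IsCurv R ∧ IsJet1 D1 ∧ IsJet2 e R D2

/-- `∇ₓric(y,z) = -∑ᵢ ∇ₓR(y,eᵢ,z,eᵢ)`. -/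
noncomputable def nablaRic (e : OrthonormalBasis (Fin n) ℝ V)
    (D1 : V →ₗ[ℝ] Curv V) (x y z : V) : ℝ :=
  - ∑ i, D1 x y (e i) z (e i)

/-- `∇²_{x,y}ric(z,w) = -∑ᵢ ∇²_{x,y}R(z,eᵢ,w,eᵢ)`. -/
noncomputable def nabla2Ric (e : OrthonormalBasis (Fin n) ℝ V)
    (D2 : V →ₗ[ℝ] V →ₗ[ℝ] Curv V) (x y z w : V) : ℝ :=
  - ∑ i, D2 x y z (e i) w (e i)

/-- The rough Laplacian `∇*∇R(z₁,z₂,z₃,z₄) = -∑ᵢ ∇²_{eᵢ,eᵢ}R(z₁,z₂,z₃,z₄)`. -/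
noncomputable def roughLap (e : OrthonormalBasis (Fin n) ℝ V)
    (D2 : V →ₗ[ℝ] V →ₗ[ℝ] Curv V) (z₁ z₂ z₃ z₄ : V) : ℝ :=
  - ∑ i, D2 (e i) (e i) z₁ z₂ z₃ z₄

/-- `∇ₓδ_yR(z,w) = -∑ᵢ ∇²_{x,eᵢ}R(eᵢ,y,z,w)`. -/
noncomputable def nablaDelta (e : OrthonormalBasis (Fin n) ℝ V)
    (D2 : V →ₗ[ℝ] V →ₗ[ℝ] Curv V) (x y z w : V) : ℝ :=
  - ∑ i, D2 x (e i) (e i) y z w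

/-- The two-jet is Einstein: `ric = c⟪·,·⟫`, `∇ric = 0` and `∇²ric = 0`. -/
def IsEinsteinJet (e : OrthonormalBasis (Fin n) ℝ V) (R : Curv V)
    (D1 : V →ₗ[ℝ] Curv V) (D2 : V →ₗ[ℝ] V →ₗ[ℝ] Curv V) : Prop :=
  (∃ c : ℝ, ∀ x y, ric e R x y = c * ⟪x, y⟫) ∧
  (∀ x y z, nablaRic e D1 x y z = 0) ∧
  (∀ x y z w, nabla2Ric e D2 x y z w = 0)

/-!
Contracting the second Bianchi identity for `∇²R` and commuting derivatives by the Ricci identity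
gives `∇*∇R(a,b,c,d) = ∇_aδ_bR(c,d) − ∇_bδ_aR(c,d) − (C(a,b,c,d) − C(b,a,c,d))`, where
`C(x,y,z,w) = Σᵢ (R_{eᵢ,x}·R)(eᵢ,y,z,w)` (`traceAct`), and the contracted Bianchi identity rewrites
`∇δR` through `∇²ric`. The Young symmetrizer of `∇²ric` yields the same terms together with their
transposes in the two derivative slots, which differ from them by `R_{x,y}·ric` (the Ricci identity
for `ric`). On the other side `R*R(a,b,c,d)` is the antisymmetrized `C` plus its pair swap, so what
is left is an identity quadratic in `R`: expanded in the basis, the quadratic terms cancel by pair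
symmetry and the first Bianchi identity, and the surviving Ricci terms match `R_{x,y}·ric`.
-/

namespace IsCurv

variable {T : Curv V} (hT : IsCurv T)
include hT

lemma antisymm_left (x y z w : V) : T x y z w = -T y x z w := hT.1 x y z w

lemma pair_symm (x y z w : V) : T x y z w = T z w x y := hT.2.1 x y z w

lemma bianchi (x y z w : V) : T x y z w + T y z x w + T z x y w = 0 := hT.2.2 x y z w

lemma antisymm_right (x y z w : V) : T x y z w = -T x y w z := by
  rw [hT.pair_symm, hT.antisymm_left, hT.pair_symm]

lemma apply_eq_sub (u x y z : V) : T u x y z = T x y z u - T x z y u := by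
  have h := hT.bianchi u x y z
  rw [hT.antisymm_right x y u z, hT.pair_symm y u x z] at h
  linarith

lemma ric_symm (e : OrthonormalBasis (Fin n) ℝ V) (x y : V) : ric e T x y = ric e T y x := by
  simp only [ric, hT.pair_symm x]

end IsCurv

def slice (T : Curv V) (p q : V) : V → V → ℝ := fun u v => T u p q v

lemma IsCurv.slice_swap {T : Curv V} (hT : IsCurv T) (p q u v : V) :
    slice T p q u v = slice T q p v u := by
  simp only [slice]
  rw [hT.antisymm_left, hT.antisymm_right, hT.pair_symm]; ring

lemma IsCurv.slice_sub_slice {T : Curv V} (hT : IsCurv T) (x y u v : V) :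
    slice T x y u v - slice T y x u v = -T x y u v := by
  have h := hT.bianchi u x y v
  simp only [slice]
  rw [hT.antisymm_left y u] at h
  linarith

section Contraction

variable (e : OrthonormalBasis (Fin n) ℝ V)

noncomputable def contraction (F G : V → V → ℝ) : ℝ := ∑ i, ∑ k, F (e i) (e k) * G (e i) (e k)

lemma contraction_comm (F G : V → V → ℝ) : contraction e F G = contraction e G F := by
  simp only [contraction, mul_comm]

lemma contraction_flip (F G : V → V → ℝ) :
    contraction e (fun u v => F v u) (fun u v => G v u) = contraction e F G := by
  rw [contraction, Finset.sum_comm, contraction]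

end Contraction

section Endomorphisms

variable {M : Type*} [AddCommMonoid M] [Module ℝ M] (e : OrthonormalBasis (Fin n) ℝ V) (R : Curv V)

noncomputable def ricEnd (x : V) : V := ∑ k, ric e R x (e k) • e k

noncomputable def traceAct (x y z w : V) : ℝ :=
  ∑ i, act4 (curvEnd e R (e i) x) (toFun4 R) (e i) y z w

lemma map_curvEnd (f : V →ₗ[ℝ] M) (u v p : V) :
    f (curvEnd e R u v p) = ∑ k, R u v p (e k) • f (e k) := by
  simp [curvEnd, map_sum, map_smul]

lemma map_ricEnd (f : V →ₗ[ℝ] M) (x : V) :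
    f (ricEnd e R x) = ∑ k, ric e R x (e k) • f (e k) := by
  simp [ricEnd, map_sum, map_smul]

lemma act4_curvEnd_apply (T : Curv V) (u v x₁ x₂ x₃ x₄ : V) :
    act4 (curvEnd e R u v) (toFun4 T) x₁ x₂ x₃ x₄ =
      -∑ k, (R u v x₁ (e k) * T (e k) x₂ x₃ x₄ + R u v x₂ (e k) * T x₁ (e k) x₃ x₄
        + R u v x₃ (e k) * T x₁ x₂ (e k) x₄ + R u v x₄ (e k) * T x₁ x₂ x₃ (e k)) := by
  simp only [act4, toFun4, map_curvEnd, LinearMap.sum_apply, LinearMap.smul_apply, smul_eq_mul,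
    Finset.sum_add_distrib]

variable {e R}

lemma ric_curvEnd (hR : IsCurv R) (x y z w : V) :
    ric e R (curvEnd e R x y z) w = R x y z (ricEnd e R w) := by
  rw [map_ricEnd]
  simp only [ric, map_curvEnd, LinearMap.sum_apply, LinearMap.smul_apply, smul_eq_mul,
    Finset.sum_mul, ← Finset.sum_neg_distrib]
  rw [Finset.sum_comm]
  refine Finset.sum_congr rfl fun k _ => Finset.sum_congr rfl fun i _ => ?_
  rw [hR.pair_symm (e k)]
  ring

end Endomorphisms

section Action

variable {e : OrthonormalBasis (Fin n) ℝ V} {R T : Curv V}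

lemma IsCurv.act4_antisymm_left (hT : IsCurv T) (B : V → V) (x y z w : V) :
    act4 B (toFun4 T) x y z w = -act4 B (toFun4 T) y x z w := by
  simp only [act4, toFun4]
  rw [hT.antisymm_left (B x), hT.antisymm_left x (B y), hT.antisymm_left x y (B z),
    hT.antisymm_left x y z (B w)]
  ring

lemma IsCurv.act4_pair_symm (hT : IsCurv T) (B : V → V) (x y z w : V) :
    act4 B (toFun4 T) x y z w = act4 B (toFun4 T) z w x y := by
  simp only [act4, toFun4]
  rw [hT.pair_symm (B x), hT.pair_symm x (B y), hT.pair_symm x y (B z), hT.pair_symm x y z]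
  ring

lemma IsCurv.act4_curvEnd_swap (hR : IsCurv R) (u v x y z w : V) :
    act4 (curvEnd e R u v) (toFun4 T) x y z w = -act4 (curvEnd e R v u) (toFun4 T) x y z w := by
  simp only [act4_curvEnd_apply, hR.antisymm_left u v, neg_mul, ← neg_add, Finset.sum_neg_distrib,
    neg_neg]

lemma IsCurv.traceAct_eq (hR : IsCurv R) (x y z w : V) :
    traceAct e R x y z w = R (ricEnd e R x) y z w
      - contraction e (slice R x y) (fun u v => R z w u v)
      + contraction e (slice R x z) (slice R y w) - contraction e (slice R x w) (slice R y z) := by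
  have hric : R (ricEnd e R x) y z w = -∑ i, ∑ k, R (e i) x (e i) (e k) * R (e k) y z w := by
    have hswap : ∀ i k, R (e i) x (e i) (e k) = R x (e i) (e k) (e i) := fun i k => by
      rw [hR.antisymm_left, hR.antisymm_right, neg_neg]
    simp only [hswap, map_ricEnd, LinearMap.sum_apply, LinearMap.smul_apply, smul_eq_mul, ric,
      neg_mul, Finset.sum_mul, Finset.sum_neg_distrib]
    rw [Finset.sum_comm]
  have hpair : ∀ i k, R (e i) (e k) z w = R z w (e i) (e k) := fun i k => hR.pair_symm _ _ _ _
  have hanti : ∀ i k, R (e i) y (e k) w = -R (e i) y w (e k) := fun i k => hR.antisymm_right _ _ _ _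
  simp only [traceAct, act4_curvEnd_apply, Finset.sum_neg_distrib, Finset.sum_add_distrib,
    contraction, slice, hric, hpair, hanti, mul_neg]
  ring

lemma IsCurv.RstarR_eq (hR : IsCurv R) (a b c d : V) :
    RstarR e R a b c d = traceAct e R a b c d - traceAct e R b a c d
      + traceAct e R c d a b - traceAct e R d c a b := by
  have h₁ : ∀ j, act4 (curvEnd e R a (e j)) (toFun4 R) (e j) b c d
      = -act4 (curvEnd e R (e j) a) (toFun4 R) (e j) b c d := fun j =>
    hR.act4_curvEnd_swap _ _ _ _ _ _
  have h₂ : ∀ j, act4 (curvEnd e R b (e j)) (toFun4 R) a (e j) c d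
      = act4 (curvEnd e R (e j) b) (toFun4 R) (e j) a c d := fun j => by
    rw [hR.act4_curvEnd_swap, hR.act4_antisymm_left, neg_neg]
  have h₃ : ∀ j, act4 (curvEnd e R c (e j)) (toFun4 R) a b (e j) d
      = -act4 (curvEnd e R (e j) c) (toFun4 R) (e j) d a b := fun j => by
    rw [hR.act4_curvEnd_swap, hR.act4_pair_symm]
  have h₄ : ∀ j, act4 (curvEnd e R d (e j)) (toFun4 R) a b c (e j)
      = act4 (curvEnd e R (e j) d) (toFun4 R) (e j) c a b := fun j => by
    rw [hR.act4_curvEnd_swap, hR.act4_pair_symm, hR.act4_antisymm_left, neg_neg]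
  simp only [RstarR, star4, traceAct, h₁, h₂, h₃, h₄, Finset.sum_neg_distrib]
  ring

/-- Ricci contraction commutes with the derivation action of the skew-adjoint `R_{x,y}`. -/
lemma IsCurv.ric_act4_curvEnd (hR : IsCurv R) (T : Curv V) (x y z w : V) :
    -∑ i, act4 (curvEnd e R x y) (toFun4 T) z (e i) w (e i)
      = act2 (curvEnd e R x y) (ric e T) z w := by
  have hskew : ∑ i, ∑ k, R x y (e i) (e k) * T z (e k) w (e i)
      = -∑ i, ∑ k, R x y (e i) (e k) * T z (e i) w (e k) := by
    rw [Finset.sum_comm, ← Finset.sum_neg_distrib]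
    refine Finset.sum_congr rfl fun i _ => ?_
    rw [← Finset.sum_neg_distrib]
    refine Finset.sum_congr rfl fun k _ => ?_
    rw [hR.antisymm_right x y (e k)]
    ring
  simp only [act4_curvEnd_apply, act2, ric, map_curvEnd, LinearMap.sum_apply,
    LinearMap.smul_apply, smul_eq_mul, Finset.sum_add_distrib, Finset.sum_neg_distrib, hskew]
  ring

lemma IsCurv.act2_curvEnd_ric (hR : IsCurv R) (x y z w : V) :
    act2 (curvEnd e R x y) (ric e R) z w = -(R x y z (ricEnd e R w) + R x y w (ricEnd e R z)) := by
  rw [act2, ric_curvEnd hR, hR.ric_symm e z, ric_curvEnd hR]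

lemma IsCurv.contraction_slice_swap (hR : IsCurv R) (p q r s : V) :
    contraction e (slice R p q) (slice R r s) = contraction e (slice R q p) (slice R s r) := by
  have h : ∀ p q, slice R p q = fun u v => slice R q p v u := fun p q => by
    funext u v; exact hR.slice_swap p q u v
  rw [h p q, h r s, contraction_flip]

lemma IsCurv.contraction_slice_sub_slice (hR : IsCurv R) (G : V → V → ℝ) (x y : V) :
    contraction e (slice R x y) G - contraction e (slice R y x) G
      = -contraction e (fun u v => R x y u v) G := by
  simp only [contraction, ← Finset.sum_sub_distrib, ← Finset.sum_neg_distrib, ← sub_mul,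
    hR.slice_sub_slice, neg_mul]

/-- After antisymmetrization the quadratic terms of `traceAct_eq` are pair-symmetric, so only
Ricci terms survive. -/
lemma IsCurv.traceAct_skew_pair_sub (hR : IsCurv R) (a b c d : V) :
    traceAct e R c d a b - traceAct e R d c a b - (traceAct e R a b c d - traceAct e R b a c d)
      = act2 (curvEnd e R c a) (ric e R) b d - act2 (curvEnd e R c b) (ric e R) a d
        - act2 (curvEnd e R d a) (ric e R) b c + act2 (curvEnd e R d b) (ric e R) a c := by
  simp only [hR.traceAct_eq, hR.act2_curvEnd_ric]
  have hab := hR.contraction_slice_sub_slice (e := e) (fun u v => R c d u v) a b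
  have hcd := hR.contraction_slice_sub_slice (e := e) (fun u v => R a b u v) c d
  have hcomm := contraction_comm e (fun u v => R a b u v) (fun u v => R c d u v)
  have hs₁ := hR.contraction_slice_swap (e := e) c a d b
  have hs₂ := hR.contraction_slice_swap (e := e) c b d a
  have hs₃ := hR.contraction_slice_swap (e := e) d a c b
  have hs₄ := hR.contraction_slice_swap (e := e) d b c a
  have hr₁ := hR.apply_eq_sub (ricEnd e R a) b c d
  have hr₂ := hR.apply_eq_sub (ricEnd e R b) a c d
  have hr₃ := hR.apply_eq_sub (ricEnd e R c) d a b
  have hr₄ := hR.apply_eq_sub (ricEnd e R d) c a b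
  have hx₁ := hR.antisymm_left c b d (ricEnd e R a)
  have hx₂ := hR.antisymm_left d b c (ricEnd e R a)
  have hx₃ := hR.antisymm_left c a d (ricEnd e R b)
  have hx₄ := hR.antisymm_left d a c (ricEnd e R b)
  linarith

end Action

section Jet

variable {e : OrthonormalBasis (Fin n) ℝ V} {R : Curv V} {D2 : V →ₗ[ℝ] V →ₗ[ℝ] Curv V}

lemma nabla2Ric_symm (hD2 : ∀ x y, IsCurv (D2 x y)) (x y z w : V) :
    nabla2Ric e D2 x y z w = nabla2Ric e D2 x y w z :=
  (hD2 x y).ric_symm e z w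

lemma nabla2Ric_sub_swap (hR : IsCurv R)
    (hRicci : ∀ x y z₁ z₂ z₃ z₄, D2 x y z₁ z₂ z₃ z₄ - D2 y x z₁ z₂ z₃ z₄ =
      act4 (curvEnd e R x y) (toFun4 R) z₁ z₂ z₃ z₄) (x y z w : V) :
    nabla2Ric e D2 x y z w - nabla2Ric e D2 y x z w = act2 (curvEnd e R x y) (ric e R) z w := by
  rw [← hR.ric_act4_curvEnd, nabla2Ric, nabla2Ric, ← Finset.sum_congr rfl fun i _ =>
    hRicci x y z (e i) w (e i), Finset.sum_sub_distrib]
  ring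

/-- The contracted second Bianchi identity. -/
lemma nablaDelta_eq (hD2 : ∀ x y, IsCurv (D2 x y))
    (hB2 : ∀ x y z w u v, D2 x y z w u v + D2 x z w y u v + D2 x w y z u v = 0) (x y z w : V) :
    nablaDelta e D2 x y z w = nabla2Ric e D2 x z y w - nabla2Ric e D2 x w y z := by
  have h : ∀ i, D2 x (e i) (e i) y z w = D2 x z w (e i) y (e i) - D2 x w z (e i) y (e i) := by
    intro i
    have hb := hB2 x (e i) z w (e i) y
    rw [← (hD2 x (e i)).pair_symm, (hD2 x z).antisymm_right w (e i), (hD2 x w).antisymm_left (e i),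
      (hD2 x w).antisymm_right z (e i)] at hb
    linarith
  rw [nablaDelta, Finset.sum_congr rfl fun i _ => h i, Finset.sum_sub_distrib,
    nabla2Ric_symm hD2 x z, nabla2Ric_symm hD2 x w, nabla2Ric, nabla2Ric]
  ring

lemma roughLap_eq (hD2 : ∀ x y, IsCurv (D2 x y))
    (hB2 : ∀ x y z w u v, D2 x y z w u v + D2 x z w y u v + D2 x w y z u v = 0)
    (hRicci : ∀ x y z₁ z₂ z₃ z₄, D2 x y z₁ z₂ z₃ z₄ - D2 y x z₁ z₂ z₃ z₄ =
      act4 (curvEnd e R x y) (toFun4 R) z₁ z₂ z₃ z₄) (a b c d : V) :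
    roughLap e D2 a b c d = nablaDelta e D2 a b c d - nablaDelta e D2 b a c d
      - (traceAct e R a b c d - traceAct e R b a c d) := by
  have h : ∀ i, D2 (e i) (e i) a b c d
      = D2 a (e i) (e i) b c d + act4 (curvEnd e R (e i) a) (toFun4 R) (e i) b c d
        - (D2 b (e i) (e i) a c d + act4 (curvEnd e R (e i) b) (toFun4 R) (e i) a c d) := by
    intro i
    have hb := hB2 (e i) (e i) a b c d
    have ha := hRicci (e i) a (e i) b c d
    have hb' := hRicci (e i) b (e i) a c d
    rw [(hD2 (e i) a).antisymm_left b] at hb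
    linarith
  simp only [roughLap, nablaDelta, traceAct, h, Finset.sum_sub_distrib, Finset.sum_add_distrib]
  ring

end Jet

lemma rowSym22_of_symm {W : Type*} {T : W → W → W → W → ℝ}
    (hT : ∀ z₁ z₂ z₃ z₄, T z₁ z₂ z₃ z₄ = T z₁ z₄ z₃ z₂) (x₁ x₂ x₃ x₄ : W) :
    rowSym22 T x₁ x₂ x₃ x₄ = 2 * (T x₁ x₂ x₃ x₄ + T x₃ x₂ x₁ x₄) := by
  rw [rowSym22, hT x₁ x₄, hT x₃ x₄]
  ring

/-- The Weitzenböck formula for the curvature tensor: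
`∇*∇R = (1/4)·Young(2,2)∇²ric − (1/2)·R*R`; in particular `∇²ric = 0` implies
`∇*∇R = −(1/2)·R*R`. -/
theorem weitzenboeck_special
    {V : Type*} [NormedAddCommGroup V] [InnerProductSpace ℝ V] {n : ℕ}
    (e : OrthonormalBasis (Fin n) ℝ V)
    (R : Curv V) (D1 : V →ₗ[ℝ] Curv V) (D2 : V →ₗ[ℝ] V →ₗ[ℝ] Curv V)
    (hjet : IsTwoJet e R D1 D2) :
    (∀ x₁ x₂ x₃ x₄, roughLap e D2 x₁ x₂ x₃ x₄ =
        (1 / 4) * young22 (fun z₁ z₂ z₃ z₄ => nabla2Ric e D2 z₁ z₃ z₂ z₄) x₁ x₂ x₃ x₄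
          - (1 / 2) * RstarR e R x₁ x₂ x₃ x₄) ∧
    ((∀ x y z w, nabla2Ric e D2 x y z w = 0) →
      ∀ x₁ x₂ x₃ x₄, roughLap e D2 x₁ x₂ x₃ x₄ = -(1 / 2) * RstarR e R x₁ x₂ x₃ x₄) := by
  obtain ⟨hR, -, hD2, hB2, hRicci⟩ := hjet
  have weitzenboeck : ∀ a b c d, roughLap e D2 a b c d =
      (1 / 4) * young22 (fun z₁ z₂ z₃ z₄ => nabla2Ric e D2 z₁ z₃ z₂ z₄) a b c d
        - (1 / 2) * RstarR e R a b c d := by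
    intro a b c d
    have hsymm : ∀ z₁ z₂ z₃ z₄, nabla2Ric e D2 z₁ z₃ z₂ z₄ = nabla2Ric e D2 z₁ z₃ z₄ z₂ :=
      fun z₁ z₂ z₃ z₄ => nabla2Ric_symm hD2 z₁ z₃ z₂ z₄
    simp only [roughLap_eq hD2 hB2 hRicci, nablaDelta_eq hD2 hB2, young22,
      rowSym22_of_symm hsymm, hR.RstarR_eq]
    have hquad := hR.traceAct_skew_pair_sub (e := e) a b c d
    have hca := nabla2Ric_sub_swap hR hRicci c a b d
    have hcb := nabla2Ric_sub_swap hR hRicci c b a d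
    have hda := nabla2Ric_sub_swap hR hRicci d a b c
    have hdb := nabla2Ric_sub_swap hR hRicci d b a c
    linarith
  refine ⟨weitzenboeck, fun hric a b c d => ?_⟩
  simp only [weitzenboeck, young22, rowSym22, hric]
  ring

end CurvJet
end

section
/- Let R be an algebraic curvature tensor on V with Ricci tensor ric := ric_R, and fix x₂,x₄,x₅,x₆ ∈ V. Consider the 5-tensor T with argument slots labeled 1,2,3,4,6, defined by T(z₁,z₂,z₃,z₄,z₆) := (R_{x₅,z₆}·R)(z₁,z₂,z₃,z₄), and let c be the Young symmetrizer of the tableau with rows {1,3,6}, {2,4} and columns {1,2}, {3,4}. Then Σᵢ (c·T)(eᵢ,x₂,eᵢ,x₄,x₆) = 6·( −2(R_{x₅,x₆}·ric)(x₂,x₄) + Σᵢ (R_{x₅,eᵢ}·R)(eᵢ,x₂,x₆,x₄) + Σᵢ (R_{x₅,eᵢ}·R)(eᵢ,x₄,x₆,x₂) − (R_{x₅,x₂}·ric)(x₄,x₆) − (R_{x₅,x₄}·ric)(x₂,x₆) ). -/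
open scoped RealInnerProductSpace

namespace CurvJet

variable {V : Type*} [NormedAddCommGroup V] [InnerProductSpace ℝ V] {n : ℕ}

/-! Put `S_w := R_{x₅,w}·R`. Each `S_w` is antisymmetric in its first pair and pair symmetric,
because `R` is and the derivation action respects these symmetries termwise. Expanding the Young
symmetrizer on the diagonal `(u, x₂, u, x₄, x₆)` and sorting the terms by which vector fills the
fifth slot, each group collapses by these symmetries. Tracing over `u = eᵢ`, the terms in
which `u` fills slots 2 and 4 contract to Ricci tensors: the extra terms in which `R_{x₅,w}` hits
`eᵢ` cancel in pairs because `R_{x₅,w}` is skew-adjoint. -/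

open Finset

open Equiv in
theorem sum_perm_fin_three {M : Type*} [AddCommMonoid M] (f : Fin 3 → Fin 3 → Fin 3 → M) :
    ∑ σ : Perm (Fin 3), f (σ 0) (σ 1) (σ 2) =
      f 0 1 2 + f 0 2 1 + f 1 0 2 + f 1 2 0 + f 2 0 1 + f 2 1 0 := by
  have huniv : (univ : Finset (Perm (Fin 3))) =
      {1, swap 1 2, swap 0 1, swap 0 1 * swap 1 2, swap 0 2 * swap 1 2, swap 0 2} := by decide
  rw [huniv, sum_insert (by decide), sum_insert (by decide), sum_insert (by decide),
    sum_insert (by decide), sum_insert (by decide), sum_singleton]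
  simp only [Perm.coe_one, id_eq, Perm.coe_mul, Function.comp_apply, swap_apply_def,
    Fin.reduceEq, ↓reduceIte]
  abel

theorem rowSym5_apply {α : Type*} (T : α → α → α → α → α → ℝ) (z₁ z₂ z₃ z₄ z₅ : α) :
    rowSym5 T z₁ z₂ z₃ z₄ z₅ =
      (T z₁ z₂ z₃ z₄ z₅ + T z₁ z₄ z₃ z₂ z₅) + (T z₁ z₂ z₅ z₄ z₃ + T z₁ z₄ z₅ z₂ z₃)
      + (T z₃ z₂ z₁ z₄ z₅ + T z₃ z₄ z₁ z₂ z₅) + (T z₃ z₂ z₅ z₄ z₁ + T z₃ z₄ z₅ z₂ z₁)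
      + (T z₅ z₂ z₁ z₄ z₃ + T z₅ z₄ z₁ z₂ z₃) + (T z₅ z₂ z₃ z₄ z₁ + T z₅ z₄ z₃ z₂ z₁) := by
  rw [rowSym5, sum_perm_fin_three (fun i j k => T (![z₁, z₃, z₅] i) z₂ (![z₁, z₃, z₅] j) z₄
    (![z₁, z₃, z₅] k) + T (![z₁, z₃, z₅] i) z₄ (![z₁, z₃, z₅] j) z₂ (![z₁, z₃, z₅] k))]
  simp

structure IsCurvSymm {α : Type*} (A : α → α → α → α → ℝ) : Prop where
  antisymm : ∀ x y z w, A x y z w = -A y x z w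
  pair_symm : ∀ x y z w, A x y z w = A z w x y

theorem IsCurvSymm.antisymm' {α : Type*} {A : α → α → α → α → ℝ} (hA : IsCurvSymm A)
    (x y z w : α) : A x y z w = -A x y w z := by
  rw [hA.pair_symm, hA.antisymm, hA.pair_symm]

theorem IsCurv.isCurvSymm {R : Curv V} (hR : IsCurv R) : IsCurvSymm (toFun4 R) :=
  ⟨hR.1, hR.2.1⟩

theorem IsCurvSymm.act4 {α : Type*} {A : α → α → α → α → ℝ} (hA : IsCurvSymm A) (B : α → α) :
    IsCurvSymm (act4 B A) where
  antisymm x y z w := by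
    simp only [CurvJet.act4]
    linear_combination -(hA.antisymm (B x) y z w + hA.antisymm x (B y) z w
      + hA.antisymm x y (B z) w + hA.antisymm x y z (B w))
  pair_symm x y z w := by
    simp only [CurvJet.act4]
    linear_combination -(hA.pair_symm (B x) y z w + hA.pair_symm x (B y) z w
      + hA.pair_symm x y (B z) w + hA.pair_symm x y z (B w))

def sym24 {α : Type*} (A : α → α → α → α → ℝ) (a b c d : α) : ℝ :=
  A a b c d + A a d c b

theorem rowSym5_family_eq {α : Type*} (S : α → α → α → α → α → ℝ)
    (hS : ∀ w a b c d, S w a b c d = S w c d a b) (z₁ z₂ z₃ z₄ z₅ : α) :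
    rowSym5 (fun z₁ z₂ z₃ z₄ z₅ => S z₅ z₁ z₂ z₃ z₄) z₁ z₂ z₃ z₄ z₅ =
      2 * (sym24 (S z₅) z₁ z₂ z₃ z₄ + sym24 (S z₃) z₁ z₂ z₅ z₄ + sym24 (S z₁) z₃ z₂ z₅ z₄) := by
  rw [rowSym5_apply, sym24, sym24, sym24]
  linear_combination hS z₅ z₃ z₂ z₁ z₄ + hS z₅ z₃ z₄ z₁ z₂ + hS z₃ z₅ z₂ z₁ z₄
    + hS z₃ z₅ z₄ z₁ z₂ + hS z₁ z₅ z₂ z₃ z₄ + hS z₁ z₅ z₄ z₃ z₂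

theorem sym24_cyclic {α : Type*} {A : α → α → α → α → ℝ}
    (hA : ∀ x y z w, A x y z w = -A y x z w) (a b c d : α) :
    sym24 A a b d c + sym24 A b a d c + sym24 A c b d a = 0 := by
  unfold sym24
  linear_combination hA a b d c + hA a c d b + hA b c d a

theorem sym24_sub_sym24_self {α : Type*} {A : α → α → α → α → ℝ}
    (hA : ∀ x y z w, A x y z w = -A y x z w) (a b c : α) :
    sym24 A b a c a - sym24 A a a c b = 3 * A b a c a := by
  unfold sym24
  linear_combination -(hA a a c b) / 2 - hA a b c a

theorem IsCurvSymm.sym24_alternate {α : Type*} {A : α → α → α → α → ℝ} (hA : IsCurvSymm A)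
    (a b c : α) :
    sym24 A a b a c - sym24 A b a a c - sym24 A a b c a + sym24 A b a c a = 6 * A b a c a := by
  unfold sym24
  linear_combination hA.pair_symm a c a b + 2 * hA.antisymm a b a c - 3 * hA.antisymm' b a a c
    - hA.antisymm a b c a - hA.antisymm' b c a a / 2 - hA.antisymm a a c b / 2

theorem young5_family_diag {α : Type*} (S : α → α → α → α → α → ℝ)
    (hS : ∀ w, IsCurvSymm (S w)) (u b c d : α) :
    young5 (fun z₁ z₂ z₃ z₄ z₅ => S z₅ z₁ z₂ z₃ z₄) u b u c d =
      6 * sym24 (S u) u b d c + 12 * S d b u c u + 6 * S b c u d u + 6 * S c b u d u := by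
  simp only [young5, rowSym5_family_eq S fun w => (hS w).pair_symm]
  -- one identity for each possible vector `d`, `u`, `b`, `c` in the fifth slot
  linear_combination (norm := (unfold sym24; ring1)) 2 * ((hS d).sym24_alternate u b c
    - sym24_cyclic (hS u).antisymm u b c d
    + sym24_sub_sym24_self (hS b).antisymm u c d + sym24_sub_sym24_self (hS c).antisymm u b d)

theorem inner_curvEnd (e : OrthonormalBasis (Fin n) ℝ V) (R : Curv V) (x y z w : V) :
    ⟪curvEnd e R x y z, w⟫ = R x y z w := by
  conv_rhs => rw [← e.sum_repr' w]
  simp [curvEnd, sum_inner, inner_smul_left, real_inner_comm, mul_comm]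

theorem inner_curvEnd_left (e : OrthonormalBasis (Fin n) ℝ V) {R : Curv V}
    (hR : ∀ x y z w, R x y z w = -R x y w z) (x y z w : V) :
    ⟪curvEnd e R x y z, w⟫ = -⟪z, curvEnd e R x y w⟫ := by
  rw [inner_curvEnd, real_inner_comm, inner_curvEnd, hR]

theorem sum_apply_skew_add_apply_skew_eq_zero (e : OrthonormalBasis (Fin n) ℝ V)
    (F : V →ₗ[ℝ] V →ₗ[ℝ] ℝ) {B : V → V} (hB : ∀ x y, ⟪B x, y⟫ = -⟪x, B y⟫) :
    ∑ i, (F (B (e i)) (e i) + F (e i) (B (e i))) = 0 := by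
  calc ∑ i, (F (B (e i)) (e i) + F (e i) (B (e i)))
      = ∑ i, ∑ j, ⟪e j, B (e i)⟫ * F (e j) (e i) + ∑ i, ∑ j, ⟪e j, B (e i)⟫ * F (e i) (e j) := by
        rw [← sum_add_distrib]
        refine sum_congr rfl fun i _ => ?_
        conv_lhs => rw [← e.sum_repr' (B (e i))]
        simp [map_sum, map_smul]
    _ = ∑ i, ∑ j, (⟪e j, B (e i)⟫ + ⟪e i, B (e j)⟫) * F (e j) (e i) := by
        rw [sum_comm (f := fun i j => ⟪e j, B (e i)⟫ * F (e i) (e j)), ← sum_add_distrib]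
        simp only [← sum_add_distrib, add_mul]
    _ = 0 := by
        refine sum_eq_zero fun i _ => sum_eq_zero fun j _ => ?_
        rw [real_inner_comm, hB, neg_add_cancel, zero_mul]

theorem sum_act4_basis_eq_neg_act2_ric (e : OrthonormalBasis (Fin n) ℝ V) (R : Curv V)
    {B : V → V} (hB : ∀ x y, ⟪B x, y⟫ = -⟪x, B y⟫) (a b : V) :
    ∑ i, act4 B (toFun4 R) a (e i) b (e i) = -act2 B (ric e R) a b := by
  have hmid := sum_apply_skew_add_apply_skew_eq_zero e ((R a).flip b) hB
  simp only [LinearMap.flip_apply, CurvJet.act4, act2, ric, toFun4, sum_neg_distrib,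
    sum_add_distrib] at hmid ⊢
  linear_combination -hmid

/-- Trace of the Young symmetrizer with rows `{1,3,6}`, `{2,4}` applied to
the 5-tensor `(z₁,z₂,z₃,z₄,z₆) ↦ (R_{x₅,z₆}·R)(z₁,z₂,z₃,z₄)`. -/
theorem young32_trace_curv_action
    {V : Type*} [NormedAddCommGroup V] [InnerProductSpace ℝ V] {n : ℕ}
    (e : OrthonormalBasis (Fin n) ℝ V)
    (R : Curv V) (hR : IsCurv R) (x₂ x₄ x₅ x₆ : V) :
    ∑ i, young5 (fun z₁ z₂ z₃ z₄ z₆ => act4 (curvEnd e R x₅ z₆) (toFun4 R) z₁ z₂ z₃ z₄)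
        (e i) x₂ (e i) x₄ x₆ =
      6 * (-2 * act2 (curvEnd e R x₅ x₆) (ric e R) x₂ x₄
           + (∑ i, act4 (curvEnd e R x₅ (e i)) (toFun4 R) (e i) x₂ x₆ x₄)
           + (∑ i, act4 (curvEnd e R x₅ (e i)) (toFun4 R) (e i) x₄ x₆ x₂)
           - act2 (curvEnd e R x₅ x₂) (ric e R) x₄ x₆
           - act2 (curvEnd e R x₅ x₄) (ric e R) x₂ x₆) := by
  have hS : ∀ w, IsCurvSymm (act4 (curvEnd e R x₅ w) (toFun4 R)) :=
    fun w => hR.isCurvSymm.act4 _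
  have hB : ∀ w x y, ⟪curvEnd e R x₅ w x, y⟫ = -⟪x, curvEnd e R x₅ w y⟫ :=
    inner_curvEnd_left e hR.isCurvSymm.antisymm' x₅
  simp only [young5_family_diag (fun w => act4 (curvEnd e R x₅ w) (toFun4 R)) hS, sym24,
    sum_add_distrib, ← mul_sum, sum_act4_basis_eq_neg_act2_ric e R (hB _)]
  ring

end CurvJet
end
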